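/- Let A be an integral domain, let x ∈ A, and let w be a positive integer. Suppose there exists a prime ideal 𝔭 of A containing x such that the localization A_𝔭 is a unique factorization domain in which the image of x is a prime element. Then A[T]/(x·T^w − 1) is an integral domain. -/

import Mathlib

/-!
In the UFD `A_𝔭` the mirror of `x T^w - 1` is `-(T^w - x)`, which is Eisenstein at the prime `x`,
hence irreducible and therefore prime. In a domain mirroring is a multiplicative involution, so
`x T^w - 1` is prime in `A_𝔭[T]`. Its constant coefficient is a unit, so up to a unit its mirror
is monic, and divisibility by `x T^w - 1` is unchanged by the injective base change `A → A_𝔭`.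
Hence `(x T^w - 1)` is the contraction of a prime ideal of `A_𝔭[T]`.
-/

open Polynomial

namespace Polynomial

section Mirror

variable {R : Type*} [CommSemiring R] [NoZeroDivisors R]

noncomputable def mirrorMulEquiv : R[X] ≃* R[X] where
  toFun := mirror
  invFun := mirror
  left_inv := mirror_involutive.leftInverse
  right_inv := mirror_involutive.rightInverse
  map_mul' p q := mirror_mul_of_domain p q

theorem mirror_dvd_mirror_iff {p q : R[X]} : p.mirror ∣ q.mirror ↔ p ∣ q :=
  map_dvd_iff (mirrorMulEquiv (R := R)) (a := p) (b := q)

theorem prime_mirror_iff {p : R[X]} : Prime p.mirror ↔ Prime p :=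
  MulEquiv.prime_iff (mirrorMulEquiv (R := R))

end Mirror

theorem natTrailingDegree_map_of_injective {R S : Type*} [Semiring R] [Semiring S] {φ : R →+* S}
    (hφ : Function.Injective φ) (p : R[X]) : (p.map φ).natTrailingDegree = p.natTrailingDegree := by
  simp [natTrailingDegree, trailingDegree, support_map_of_injective _ hφ]

theorem mirror_map_of_injective {R S : Type*} [Semiring R] [Semiring S] {φ : R →+* S}
    (hφ : Function.Injective φ) (p : R[X]) : (p.map φ).mirror = p.mirror.map φ := by
  simp only [mirror, reverse, Polynomial.map_mul, Polynomial.map_pow, map_X, reflect_map,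
    natDegree_map_eq_of_injective hφ, natTrailingDegree_map_of_injective hφ]

theorem mirror_C_mul_X_pow_sub_one {R : Type*} [Ring R] [Nontrivial R] {x : R} (hx : x ≠ 0)
    {w : ℕ} (hw : 0 < w) :
    (C x * X ^ w - 1 : R[X]).mirror = -(X ^ w - C x) := by
  have hdeg : (C x * X ^ w - 1 : R[X]).natDegree = w := by
    rw [natDegree_sub_eq_left_of_natDegree_lt] <;> simp [natDegree_C_mul_X_pow w x hx, hw]
  have htrail : (C x * X ^ w - 1 : R[X]).natTrailingDegree = 0 := by
    rw [natTrailingDegree_eq_zero]; right; simp [hw.ne]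
  rw [mirror, reverse, hdeg, htrail]
  simp [reflect_sub, revAt_le]

theorem irreducible_X_pow_sub_C_of_prime {R : Type*} [CommRing R] [IsDomain R] {x : R}
    (hx : Prime x) {w : ℕ} (hw : 0 < w) : Irreducible (X ^ w - C x : R[X]) := by
  have hmonic : (X ^ w - C x : R[X]).Monic := monic_X_pow_sub_C x hw.ne'
  have hdeg : (X ^ w - C x : R[X]).natDegree = w := natDegree_X_pow_sub_C
  have hspan : Ideal.span {x} ≠ ⊤ := by
    rw [Ne, Ideal.span_singleton_eq_top]
    exact hx.not_isUnit
  refine (hmonic.isEisensteinAt_of_mem_of_notMem hspan (fun hn => ?_) ?_).irreducible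
    ((Ideal.span_singleton_prime hx.ne_zero).2 hx) hmonic.isPrimitive (by rwa [hdeg])
  · rw [hdeg] at hn
    simp only [coeff_sub, coeff_X_pow, hn.ne, ↓reduceIte, coeff_C, zero_sub, neg_mem_iff,
      Ideal.mem_span_singleton]
    split_ifs <;> simp
  · simp only [Ideal.span_singleton_pow, coeff_sub, coeff_X_pow, hw.ne, ↓reduceIte, coeff_C_zero,
      zero_sub, neg_mem_iff, Ideal.mem_span_singleton]
    intro h
    have := (pow_dvd_pow_iff hx.ne_zero hx.not_isUnit).1 (by rwa [pow_one] : x ^ 2 ∣ x ^ 1)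
    omega

theorem prime_C_mul_X_pow_sub_one {R : Type*} [CommRing R] [IsDomain R]
    [UniqueFactorizationMonoid R] {x : R} (hx : Prime x) {w : ℕ} (hw : 0 < w) :
    Prime (C x * X ^ w - 1 : R[X]) := by
  rw [← prime_mirror_iff, mirror_C_mul_X_pow_sub_one hx.ne_zero hw]
  exact (irreducible_X_pow_sub_C_of_prime hx hw).prime.neg

theorem map_dvd_map_of_isUnit_coeff_zero {R S : Type*} [CommRing R] [IsDomain R]
    [CommRing S] [NoZeroDivisors S] {φ : R →+* S} (hφ : Function.Injective φ) {f p : R[X]}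
    (hf : IsUnit (f.coeff 0)) : f.map φ ∣ p.map φ ↔ f ∣ p := by
  refine ⟨fun h => ?_, map_dvd φ⟩
  obtain ⟨u, hu⟩ := hf
  have hmonic : (C (↑u⁻¹ : R) * f.mirror).Monic := by
    rw [Monic, leadingCoeff_mul, leadingCoeff_C, mirror_leadingCoeff,
      trailingCoeff_eq_coeff_zero (hu ▸ u.ne_zero), ← hu, Units.inv_mul]
  rw [← mirror_dvd_mirror_iff, ← (isUnit_C.2 u⁻¹.isUnit).mul_left_dvd, ← map_dvd_map φ hφ hmonic,
    Polynomial.map_mul, map_C, ← mirror_map_of_injective hφ, ← mirror_map_of_injective hφ,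
    (isUnit_C.2 (u⁻¹.isUnit.map φ)).mul_left_dvd, mirror_dvd_mirror_iff]
  exact h

end Polynomial

theorem isDomain_polynomial_quotient_of_localization_prime_general
    {A : Type*} [CommRing A] [IsDomain A] (x : A) {w : ℕ} (hw : 0 < w)
    (𝔭 : Ideal A) (h𝔭 : 𝔭.IsPrime)
    (hufd : UniqueFactorizationMonoid (Localization.AtPrime 𝔭))
    (hprime : Prime (algebraMap A (Localization.AtPrime 𝔭) x)) :
    IsDomain
      (Polynomial A ⧸ Ideal.span {Polynomial.C x * Polynomial.X ^ w - 1}) := by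
  set φ := algebraMap A (Localization.AtPrime 𝔭)
  have hφ : Function.Injective φ :=
    IsLocalization.injective _ 𝔭.primeCompl_le_nonZeroDivisors
  have hprimeR : Prime (C (φ x) * X ^ w - 1) := prime_C_mul_X_pow_sub_one hprime hw
  have hunit : IsUnit ((C x * X ^ w - 1).coeff 0) := by simp [hw.ne]
  have hspan : Ideal.span {C x * X ^ w - 1} =
      (Ideal.span {C (φ x) * X ^ w - 1}).comap (mapRingHom φ) := by
    ext p
    simpa [Ideal.mem_span_singleton] using
      (map_dvd_map_of_isUnit_coeff_zero hφ hunit).symm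
  rw [Ideal.Quotient.isDomain_iff_prime, hspan]
  exact ((Ideal.span_singleton_prime hprimeR.ne_zero).2 hprimeR).comap _

/-- let `A` be an integral domain, `x ∈ A`, `w ≥ 1`, and suppose some prime
ideal `𝔭` containing `x` is such that `A_𝔭` is a UFD in which the image of `x` is prime.
Then `A[T]/(x·T^w − 1)` is an integral domain. -/
theorem isDomain_polynomial_quotient_of_localization_prime
    {A : Type*} [CommRing A] [IsDomain A] (x : A) {w : ℕ} (hw : 0 < w)
    (𝔭 : Ideal A) (h𝔭 : 𝔭.IsPrime) (hx𝔭 : x ∈ 𝔭)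
    (hufd : UniqueFactorizationMonoid (Localization.AtPrime 𝔭))
    (hprime : Prime (algebraMap A (Localization.AtPrime 𝔭) x)) :
    IsDomain
      (Polynomial A ⧸ Ideal.span {Polynomial.C x * Polynomial.X ^ w - 1}) :=
  isDomain_polynomial_quotient_of_localization_prime_general x hw 𝔭 h𝔭 hufd hprime
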